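/- arXiv:2211.07162 — 4 statements merged into one kernel-verified Lean document; each statement's English description precedes it below -/
import Mathlib

section
/- For every real number γ with 0 < γ ≤ 1 and every t ≥ 0, the supremum over λ ∈ [0,1] of λ^γ · e^{-λ t} is at most max{γ^γ, 1} / (1+t)^γ. -/
/-- For every real `γ` with `0 < γ ≤ 1` and every `t ≥ 0`, the supremum over
`λ ∈ [0,1]` of `λ^γ * exp(-λ t)` is at most `max (γ^γ) 1 / (1+t)^γ`. -/
theorem stmt0 (γ t : ℝ) (hγ0 : 0 < γ) (hγ1 : γ ≤ 1) (ht : 0 ≤ t) :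
    (⨆ l : Set.Icc (0:ℝ) 1, (l : ℝ) ^ γ * Real.exp (-(l : ℝ) * t)) ≤
      max (γ ^ γ) 1 / (1 + t) ^ γ := by
  have h1t : (0:ℝ) < 1 + t := by linarith
  apply ciSup_le
  rintro ⟨l, hl0, hl1⟩
  simp only
  have hlt : (0:ℝ) ≤ l * t := mul_nonneg hl0 ht
  have key : (l * (1 + t)) ^ γ ≤ Real.exp (l * t) := by
    rcases le_or_gt (l * (1 + t)) 1 with h | h
    · calc (l * (1 + t)) ^ γ ≤ 1 ^ γ :=
            Real.rpow_le_rpow (by positivity) h hγ0.le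
        _ = 1 := Real.one_rpow γ
        _ ≤ Real.exp (l * t) := Real.one_le_exp hlt
    · calc (l * (1 + t)) ^ γ ≤ (l * (1 + t)) ^ (1:ℝ) :=
            Real.rpow_le_rpow_of_exponent_le h.le hγ1
        _ = l * (1 + t) := Real.rpow_one _
        _ ≤ 1 + l * t := by nlinarith
        _ ≤ Real.exp (l * t) := by
            have := Real.add_one_le_exp (l * t); linarith
  rw [le_div_iff₀ (by positivity : (0:ℝ) < (1 + t) ^ γ)]
  calc l ^ γ * Real.exp (-l * t) * (1 + t) ^ γ
      = (l * (1 + t)) ^ γ * Real.exp (-l * t) := by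
        rw [Real.mul_rpow hl0 h1t.le]; ring
    _ ≤ Real.exp (l * t) * Real.exp (-l * t) :=
        mul_le_mul_of_nonneg_right key (Real.exp_pos _).le
    _ = 1 := by rw [← Real.exp_add]; ring_nf; exact Real.exp_zero
    _ ≤ max (γ ^ γ) 1 := le_max_right _ _
end

section
/- Let F : X → Y be Fréchet differentiable on a convex set B, and suppose there exist a map x ↦ R_x into bounded linear operators on Y and a constant c_R ≥ 0 such that F'(x) = R_x ∘ F'(x†) and ‖R_x - I‖ ≤ c_R ‖x - x†‖ for all x ∈ B, where x† ∈ B. Then for all x ∈ B: ‖F(x) - F(x†) - F'(x†)(x - x†)‖ ≤ (c_R/2) ‖F'(x†)(x - x†)‖ · ‖x - x†‖. -/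
/-!
With `h = x - x†`, the remainder `g t = F(x† + t h) - F(x†) - t F'(x†) h` has derivative
`(F'(x† + t h) - F'(x†)) h = (R_{x† + t h} - I) F'(x†) h`, whose norm is at most
`c_R t ‖h‖ ‖F'(x†) h‖`. Integrating this linear bound over `[0, 1]` gives the factor `1/2`.
-/

open Set

theorem norm_image_one_le_of_norm_deriv_le_mul {E : Type*} [NormedAddCommGroup E]
    [NormedSpace ℝ E] {g g' : ℝ → E} {K : ℝ} (hg0 : g 0 = 0)
    (hg : ∀ t ∈ Icc (0 : ℝ) 1, HasDerivAt g (g' t) t)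
    (hbound : ∀ t ∈ Icc (0 : ℝ) 1, ‖g' t‖ ≤ K * t) :
    ‖g 1‖ ≤ K / 2 := by
  have hcont : ContinuousOn g (Icc 0 1) := fun t ht => (hg t ht).continuousAt.continuousWithinAt
  have hquad : ∀ t : ℝ, HasDerivAt (fun t => K / 2 * (t * t)) (K / 2 * (1 * t + t * 1)) t :=
    fun t => ((hasDerivAt_id t).mul (hasDerivAt_id t)).const_mul (K / 2)
  have key := image_norm_le_of_norm_deriv_right_le_deriv_boundary hcont
    (fun t ht => (hg t (Ico_subset_Icc_self ht)).hasDerivWithinAt) (by simp [hg0]) hquad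
    (fun t ht => (hbound t (Ico_subset_Icc_self ht)).trans_eq (by ring))
    (right_mem_Icc.mpr zero_le_one)
  simpa using key

theorem norm_image_sub_sub_fderiv_le_of_norm_fderiv_sub_le {E F : Type*} [NormedAddCommGroup E]
    [NormedSpace ℝ E] [NormedAddCommGroup F] [NormedSpace ℝ F] {f : E → F}
    {f' : E → E →L[ℝ] F} {a b : E} {C : ℝ}
    (hf : ∀ z ∈ segment ℝ a b, HasFDerivAt f (f' z) z)
    (hbound : ∀ z ∈ segment ℝ a b, ‖(f' z - f' a) (b - a)‖ ≤ C * ‖z - a‖) :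
    ‖f b - f a - f' a (b - a)‖ ≤ C / 2 * ‖b - a‖ := by
  have hmem : ∀ t ∈ Icc (0 : ℝ) 1, a + t • (b - a) ∈ segment ℝ a b := by
    intro t ht
    rw [segment_eq_image']
    exact ⟨t, ht, rfl⟩
  have hderiv : ∀ t ∈ Icc (0 : ℝ) 1,
      HasDerivAt (fun t : ℝ => f (a + t • (b - a)) - f a - t • f' a (b - a))
        ((f' (a + t • (b - a)) - f' a) (b - a)) t := by
    intro t ht
    have hline : HasDerivAt (fun t : ℝ => a + t • (b - a)) (b - a) t := by
      simpa using ((hasDerivAt_id t).smul_const (b - a)).const_add a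
    have hcomp := (hf _ (hmem t ht)).comp_hasDerivAt t hline
    simpa [Pi.sub_def] using (hcomp.sub_const (f a)).sub ((hasDerivAt_id t).smul_const (f' a (b - a)))
  have key := norm_image_one_le_of_norm_deriv_le_mul (K := C * ‖b - a‖) (by simp) hderiv
    fun t ht => by
      have h := hbound _ (hmem t ht)
      rwa [add_sub_cancel_left, norm_smul, Real.norm_of_nonneg ht.1, mul_left_comm,
        mul_comm t] at h
  simpa [mul_div_right_comm] using key

theorem stmt5_general {X Y : Type*} [NormedAddCommGroup X] [InnerProductSpace ℝ X]
    [NormedAddCommGroup Y] [InnerProductSpace ℝ Y]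
    (F : X → Y) (F' : X → X →L[ℝ] Y) (B : Set X) (hB : Convex ℝ B)
    (xd : X) (hxd : xd ∈ B)
    (hderiv : ∀ x ∈ B, HasFDerivAt F (F' x) x)
    (R : X → Y →L[ℝ] Y) (cR : ℝ)
    (hR : ∀ x ∈ B, F' x = (R x).comp (F' xd))
    (hRI : ∀ x ∈ B, ‖R x - ContinuousLinearMap.id ℝ Y‖ ≤ cR * ‖x - xd‖) :
    ∀ x ∈ B, ‖F x - F xd - F' xd (x - xd)‖ ≤ cR / 2 * ‖F' xd (x - xd)‖ * ‖x - xd‖ := by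
  intro x hx
  have hseg : segment ℝ xd x ⊆ B := hB.segment_subset hxd hx
  have hbound : ∀ z ∈ segment ℝ xd x,
      ‖(F' z - F' xd) (x - xd)‖ ≤ cR * ‖F' xd (x - xd)‖ * ‖z - xd‖ := by
    intro z hz
    have hrepr : (F' z - F' xd) (x - xd) =
        (R z - ContinuousLinearMap.id ℝ Y) (F' xd (x - xd)) := by
      simp [hR z (hseg hz)]
    calc ‖(F' z - F' xd) (x - xd)‖
        ≤ ‖R z - ContinuousLinearMap.id ℝ Y‖ * ‖F' xd (x - xd)‖ := hrepr ▸ ContinuousLinearMap.le_opNorm _ _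
      _ ≤ cR * ‖z - xd‖ * ‖F' xd (x - xd)‖ := by gcongr; exact hRI z (hseg hz)
      _ = cR * ‖F' xd (x - xd)‖ * ‖z - xd‖ := by ring
  have key := norm_image_sub_sub_fderiv_le_of_norm_fderiv_sub_le
    (fun z hz => hderiv z (hseg hz)) hbound
  rwa [mul_div_right_comm] at key

/-- If `F'(x) = R_x ∘ F'(x†)` with `‖R_x - I‖ ≤ c_R ‖x - x†‖` on a convex set `B ∋ x†`,
then `‖F(x) - F(x†) - F'(x†)(x - x†)‖ ≤ (c_R/2) ‖F'(x†)(x - x†)‖ ‖x - x†‖` for `x ∈ B`. -/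
theorem stmt5 {X Y : Type*} [NormedAddCommGroup X] [InnerProductSpace ℝ X]
    [NormedAddCommGroup Y] [InnerProductSpace ℝ Y]
    (F : X → Y) (F' : X → X →L[ℝ] Y) (B : Set X) (hB : Convex ℝ B)
    (xd : X) (hxd : xd ∈ B)
    (hderiv : ∀ x ∈ B, HasFDerivAt F (F' x) x)
    (R : X → Y →L[ℝ] Y) (cR : ℝ) (hcR : 0 ≤ cR)
    (hR : ∀ x ∈ B, F' x = (R x).comp (F' xd))
    (hRI : ∀ x ∈ B, ‖R x - ContinuousLinearMap.id ℝ Y‖ ≤ cR * ‖x - xd‖) :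
    ∀ x ∈ B, ‖F x - F xd - F' xd (x - xd)‖ ≤ cR / 2 * ‖F' xd (x - xd)‖ * ‖x - xd‖ :=
  stmt5_general F F' B hB xd hxd hderiv R cR hR hRI
end

section
/- Let X be a real Hilbert space, ς an X-valued random variable, and V a bounded self-adjoint nonnegative operator on X. Then for any 0 < a ≤ b, ‖E[V^a ς]‖ ≤ E[‖V^b ς‖]^{a/b} · E[‖ς‖]^{1 - a/b}, assuming the relevant expectations are finite. -/
open MeasureTheory RealInnerProductSpace


private lemma amgm_aux {θ u w s : ℝ} (hθ0 : 0 < θ) (hθ1 : θ < 1) (hu : 0 ≤ u) (hw : 0 ≤ w)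
    (hs : 0 < s) :
    u ^ θ * w ^ (1 - θ) ≤ θ * s * u + (1 - θ) * s ^ (-(θ / (1 - θ))) * w := by
  have h1θ : (0:ℝ) < 1 - θ := by linarith
  have hsnn : (0:ℝ) ≤ s := hs.le
  have key := Real.geom_mean_le_arith_mean2_weighted hθ0.le h1θ.le
    (mul_nonneg hsnn hu) (mul_nonneg (Real.rpow_nonneg hsnn (-(θ / (1 - θ)))) hw) (by ring)
  have e1 : (s * u) ^ θ = s ^ θ * u ^ θ := Real.mul_rpow hsnn hu
  have e2 : (s ^ (-(θ / (1 - θ))) * w) ^ (1 - θ) = s ^ (-θ) * w ^ (1 - θ) := by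
    rw [Real.mul_rpow (Real.rpow_nonneg hsnn _) hw, ← Real.rpow_mul hsnn]
    congr 2
    field_simp
  have e3 : s ^ θ * s ^ (-θ) = 1 := by
    rw [← Real.rpow_add hs]; simp
  calc u ^ θ * w ^ (1 - θ) = (s ^ θ * s ^ (-θ)) * (u ^ θ * w ^ (1 - θ)) := by rw [e3, one_mul]
    _ = (s * u) ^ θ * (s ^ (-(θ / (1 - θ))) * w) ^ (1 - θ) := by rw [e1, e2]; ring
    _ ≤ θ * (s * u) + (1 - θ) * (s ^ (-(θ / (1 - θ))) * w) := key
    _ = θ * s * u + (1 - θ) * s ^ (-(θ / (1 - θ))) * w := by ring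

private lemma key_opt {θ A u w : ℝ} (hθ0 : 0 < θ) (hθ1 : θ < 1) (hu : 0 ≤ u) (hw : 0 ≤ w)
    (H : ∀ t : ℝ, 0 < t → A ≤ θ * t * u + (1 - θ) * t ^ (-(θ / (1 - θ))) * w) :
    A ≤ u ^ θ * w ^ (1 - θ) := by
  have h1θ : (0:ℝ) < 1 - θ := by linarith
  have hc : (0:ℝ) < θ / (1 - θ) := div_pos hθ0 h1θ
  rcases eq_or_lt_of_le hu with hu0 | hu0
  · -- u = 0
    rw [← hu0, Real.zero_rpow hθ0.ne', zero_mul]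
    rcases eq_or_lt_of_le hw with hw0 | hw0
    · have := H 1 one_pos
      simpa [← hu0, ← hw0] using this
    · refine le_of_forall_pos_le_add fun ε hε => ?_
      set t : ℝ := (((1 - θ) * w) / ε) ^ ((θ / (1 - θ))⁻¹) with ht
      have hbase : (0:ℝ) < ((1 - θ) * w) / ε := div_pos (mul_pos h1θ hw0) hε
      have htpos : 0 < t := Real.rpow_pos_of_pos hbase _
      have htc : t ^ (-(θ / (1 - θ))) = ε / ((1 - θ) * w) := by
        rw [ht, ← Real.rpow_mul hbase.le]
        have he : (θ / (1 - θ))⁻¹ * -(θ / (1 - θ)) = -1 := by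
          field_simp
        rw [he, Real.rpow_neg_one, inv_div]
      have := H t htpos
      rw [← hu0, htc] at this
      calc A ≤ θ * t * 0 + (1 - θ) * (ε / ((1 - θ) * w)) * w := this
        _ = ε := by field_simp; ring
        _ = 0 + ε := by ring
  · rcases eq_or_lt_of_le hw with hw0 | hw0
    · -- w = 0
      rw [← hw0, Real.zero_rpow h1θ.ne', mul_zero]
      refine le_of_forall_pos_le_add fun ε hε => ?_
      have htpos : 0 < ε / (θ * u) := div_pos hε (mul_pos hθ0 hu0)
      have := H _ htpos
      rw [← hw0] at this
      calc A ≤ θ * (ε / (θ * u)) * u + (1 - θ) * (ε / (θ * u)) ^ (-(θ / (1 - θ))) * 0 := this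
        _ = ε := by field_simp; ring
        _ = 0 + ε := by ring
    · -- u, w > 0
      set t : ℝ := (w / u) ^ (1 - θ) with ht
      have hbase : (0:ℝ) < w / u := div_pos hw0 hu0
      have htpos : 0 < t := Real.rpow_pos_of_pos hbase _
      have hune : u ^ (1 - θ) ≠ 0 := (Real.rpow_pos_of_pos hu0 _).ne'
      have hwne : w ^ θ ≠ 0 := (Real.rpow_pos_of_pos hw0 _).ne'
      have hupow : u ^ θ * u ^ (1 - θ) = u := by rw [← Real.rpow_add hu0]; norm_num
      have hwpow : w ^ θ * w ^ (1 - θ) = w := by rw [← Real.rpow_add hw0]; norm_num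
      have htc : t ^ (-(θ / (1 - θ))) = u ^ θ / w ^ θ := by
        rw [ht, ← Real.rpow_mul hbase.le]
        have he : (1 - θ) * -(θ / (1 - θ)) = -θ := by field_simp
        rw [he, Real.rpow_neg hbase.le, Real.div_rpow hw0.le hu0.le, inv_div]
      have h1 : θ * t * u = θ * (u ^ θ * w ^ (1 - θ)) := by
        have e : t * u = u ^ θ * w ^ (1 - θ) := by
          rw [ht, Real.div_rpow hw0.le hu0.le, div_mul_eq_mul_div, div_eq_iff hune]
          linear_combination (-(w ^ (1 - θ))) * hupow
        rw [mul_assoc, e]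
      have h2 : (1 - θ) * t ^ (-(θ / (1 - θ))) * w = (1 - θ) * (u ^ θ * w ^ (1 - θ)) := by
        have e : u ^ θ / w ^ θ * w = u ^ θ * w ^ (1 - θ) := by
          rw [div_mul_eq_mul_div, div_eq_iff hwne]
          linear_combination (-(u ^ θ)) * hwpow
        rw [htc, mul_assoc, e]
      have := H t htpos
      rw [h1, h2] at this
      linarith

private lemma sqswap_aux {r : ℝ} (e : ℝ) (hr : 0 ≤ r) : (r ^ 2) ^ e = (r ^ e) ^ 2 := by
  rw [← Real.rpow_natCast r 2, ← Real.rpow_mul hr, mul_comm, Real.rpow_mul hr, Real.rpow_natCast]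


/-- Stochastic interpolation inequality: for a bounded self-adjoint nonnegative operator `V`
on a real Hilbert space, with fractional powers `V^a = φ(λ ↦ λ^a)` given by the (star-algebra
homomorphism) functional calculus `φ` with `φ(id) = V`, and an integrable `X`-valued random
variable `ς`, one has `‖E[V^a ς]‖ ≤ E[‖V^b ς‖]^(a/b) * E[‖ς‖]^(1 - a/b)` for `0 < a ≤ b`. -/
theorem stmt6 {X : Type*} [NormedAddCommGroup X] [InnerProductSpace ℝ X] [CompleteSpace X]
    {Ω : Type*} [MeasurableSpace Ω] (μ : Measure Ω) [IsProbabilityMeasure μ]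
    (ς : Ω → X) (hint : Integrable ς μ)
    (V : X →L[ℝ] X) (hVsa : IsSelfAdjoint V) (hVpos : ∀ z : X, 0 ≤ ⟪V z, z⟫)
    (φ : C(Set.Ici (0:ℝ), ℝ) →⋆ₐ[ℝ] (X →L[ℝ] X))
    (hφV : φ ⟨fun x => (x : ℝ), by fun_prop⟩ = V)
    (a b : ℝ) (ha : 0 < a) (hab : a ≤ b)
    (fa fb : C(Set.Ici (0:ℝ), ℝ))
    (hfa : ∀ x : Set.Ici (0:ℝ), fa x = (x : ℝ) ^ a)
    (hfb : ∀ x : Set.Ici (0:ℝ), fb x = (x : ℝ) ^ b) :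
    ‖∫ ω, φ fa (ς ω) ∂μ‖ ≤
      (∫ ω, ‖φ fb (ς ω)‖ ∂μ) ^ (a / b) * (∫ ω, ‖ς ω‖ ∂μ) ^ (1 - a / b) := by
  have hb : 0 < b := lt_of_lt_of_le ha hab
  rcases eq_or_lt_of_le hab with heq | hlt
  · -- a = b
    subst heq
    have hfab : fa = fb := ContinuousMap.ext fun x => by rw [hfa, hfb]
    rw [div_self ha.ne', Real.rpow_one, sub_self, Real.rpow_zero, mul_one, ← hfab]
    exact norm_integral_le_integral_norm _
  -- a < b
  set θ : ℝ := a / b with hθdef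
  have hθ0 : 0 < θ := div_pos ha hb
  have hθ1 : θ < 1 := (div_lt_one hb).mpr hlt
  -- self-adjointness and basic identities
  have hadj : ∀ f : C(Set.Ici (0:ℝ), ℝ), ContinuousLinearMap.adjoint (φ f) = φ f := by
    intro f
    rw [← ContinuousLinearMap.star_eq_adjoint, ← map_star]
    congr 1
  have hswap : ∀ f : C(Set.Ici (0:ℝ), ℝ), ∀ z y : X, ⟪z, φ f y⟫ = ⟪φ f z, y⟫ := fun f z y => by
    rw [← ContinuousLinearMap.adjoint_inner_left (φ f) y z, hadj]
  have hnsq : ∀ f : C(Set.Ici (0:ℝ), ℝ), ∀ z : X, ⟪z, φ (f * f) z⟫ = ‖φ f z‖ ^ 2 := fun f z => by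
    rw [map_mul, ContinuousLinearMap.mul_apply, hswap f z (φ f z), real_inner_self_eq_norm_sq]
  have hpos : ∀ g : C(Set.Ici (0:ℝ), ℝ), (∀ x, 0 ≤ g x) → ∀ z : X, 0 ≤ ⟪z, φ g z⟫ := by
    intro g hg z
    set r : C(Set.Ici (0:ℝ), ℝ) :=
      ⟨fun x => Real.sqrt (g x), Real.continuous_sqrt.comp (map_continuous g)⟩ with hr
    have hrr : r * r = g := ContinuousMap.ext fun x => Real.mul_self_sqrt (hg x)
    rw [← hrr, hnsq]
    positivity
  -- pointwise squared inequality
  have hdet_sq : ∀ s : ℝ, 0 < s → ∀ z : X,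
      ‖φ fa z‖ ^ 2 ≤ θ * s * ‖φ fb z‖ ^ 2 + (1 - θ) * s ^ (-(θ / (1 - θ))) * ‖z‖ ^ 2 := by
    intro s hs z
    set g : C(Set.Ici (0:ℝ), ℝ) :=
      (θ * s) • (fb * fb) + ((1 - θ) * s ^ (-(θ / (1 - θ)))) • (1 : C(Set.Ici (0:ℝ), ℝ)) - fa * fa
      with hgdef
    have hg : ∀ x, 0 ≤ g x := by
      intro x
      have hx : (0:ℝ) ≤ (x : ℝ) := x.2
      simp only [hgdef, ContinuousMap.sub_apply, ContinuousMap.add_apply,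
        ContinuousMap.smul_apply, ContinuousMap.mul_apply, ContinuousMap.one_apply,
        smul_eq_mul, mul_one]
      have key := amgm_aux hθ0 hθ1 (mul_self_nonneg (fb x)) zero_le_one hs
      rw [Real.one_rpow, mul_one] at key
      have e1 : (fb x * fb x) ^ θ = fa x * fa x := by
        rw [hfa, hfb, ← Real.rpow_add' hx (by positivity), ← Real.rpow_add' hx (by positivity),
          ← Real.rpow_mul hx]
        congr 1
        rw [hθdef]
        field_simp
      rw [e1] at key
      linarith
    have h0 := hpos g hg z
    have hφg : φ g = (θ * s) • φ (fb * fb)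
        + ((1 - θ) * s ^ (-(θ / (1 - θ)))) • (1 : X →L[ℝ] X) - φ (fa * fa) := by
      rw [hgdef, map_sub, map_add, _root_.map_smul, _root_.map_smul, map_one]
    rw [hφg] at h0
    simp only [ContinuousLinearMap.sub_apply, ContinuousLinearMap.add_apply,
      ContinuousLinearMap.smul_apply, ContinuousLinearMap.one_apply] at h0
    rw [inner_sub_right, inner_add_right, real_inner_smul_right, real_inner_smul_right,
      hnsq, hnsq, real_inner_self_eq_norm_sq] at h0
    linarith
  -- pointwise interpolation inequality
  have hdet : ∀ z : X, ‖φ fa z‖ ≤ ‖φ fb z‖ ^ θ * ‖z‖ ^ (1 - θ) := by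
    intro z
    have hk := key_opt hθ0 hθ1 (sq_nonneg ‖φ fb z‖) (sq_nonneg ‖z‖) (fun t ht => hdet_sq t ht z)
    have e : (‖φ fb z‖ ^ 2) ^ θ * (‖z‖ ^ 2) ^ (1 - θ) = (‖φ fb z‖ ^ θ * ‖z‖ ^ (1 - θ)) ^ 2 := by
      rw [sqswap_aux θ (norm_nonneg _), sqswap_aux (1 - θ) (norm_nonneg _), mul_pow]
    have hB : 0 ≤ ‖φ fb z‖ ^ θ * ‖z‖ ^ (1 - θ) :=
      mul_nonneg (Real.rpow_nonneg (norm_nonneg _) _) (Real.rpow_nonneg (norm_nonneg _) _)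
    have := Real.sqrt_le_sqrt (hk.trans_eq e)
    rwa [Real.sqrt_sq (norm_nonneg _), Real.sqrt_sq hB] at this
  -- integration
  have hIan : Integrable (fun ω => ‖φ fa (ς ω)‖) μ := ((φ fa).integrable_comp hint).norm
  have hIbn : Integrable (fun ω => ‖φ fb (ς ω)‖) μ := ((φ fb).integrable_comp hint).norm
  have hςn : Integrable (fun ω => ‖ς ω‖) μ := hint.norm
  have hint_s : ∀ s : ℝ, 0 < s →
      (∫ ω, ‖φ fa (ς ω)‖ ∂μ) ≤ θ * s * (∫ ω, ‖φ fb (ς ω)‖ ∂μ)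
        + (1 - θ) * s ^ (-(θ / (1 - θ))) * (∫ ω, ‖ς ω‖ ∂μ) := by
    intro s hs
    have mono := integral_mono (μ := μ) hIan
      ((hIbn.const_mul (θ * s)).add (hςn.const_mul ((1 - θ) * s ^ (-(θ / (1 - θ))))))
      (fun ω => (hdet (ς ω)).trans
        (amgm_aux hθ0 hθ1 (norm_nonneg _) (norm_nonneg _) hs))
    simp only [Pi.add_apply] at mono
    rwa [integral_add (hIbn.const_mul _) (hςn.const_mul _), integral_const_mul,
      integral_const_mul] at mono
  have final := key_opt hθ0 hθ1 (integral_nonneg fun ω => norm_nonneg _)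
    (integral_nonneg fun ω => norm_nonneg _) hint_s
  calc ‖∫ ω, φ fa (ς ω) ∂μ‖ ≤ ∫ ω, ‖φ fa (ς ω)‖ ∂μ := norm_integral_le_integral_norm _
    _ ≤ _ := final
end

section
/- Let V be a bounded self-adjoint operator on a Hilbert space with spectrum contained in [0,1], and let t ≥ 0. Then ‖∫₀ᵗ e^{-V(t-s)} V^{1/2} ds‖ ≤ ∫₀ᵗ (1+t-s)^{-1/2} ds ≤ 2√(1+t); in particular the operator norm of ∫₀ᵗ e^{-V(t-s)} V^{1/2} ds is bounded by 2√(1+t). -/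
/-!
Write `x(u) = e^{-uV} x` with `V = W²`. Then `d/du ‖x‖² = -2‖W x‖²` and
`d/du ‖W x‖² = -2‖V x‖² ≤ 0`, so `‖x(u)‖² + 2u‖W x(u)‖²` is nonincreasing. As `V` is
self-adjoint, its norm is its spectral radius, so `‖V‖ ≤ 1` and hence `‖W‖ ≤ 1`; this gives
`(1 + 2τ)‖W e^{-τV} x‖² ≤ ‖x‖²`, i.e. `‖e^{-τV} W‖ ≤ (1 + τ)^{-1/2}`, which is integrated over
`τ = t - s`. Finally `∫₀ᵗ (1+t-s)^{-1/2} ds = 2(√(1+t) - 1)`.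
-/

open NormedSpace RealInnerProductSpace

section

variable {X : Type*} [NormedAddCommGroup X] [NormedSpace ℝ X] [CompleteSpace X]

theorem hasDerivAt_exp_smul_apply (A : X →L[ℝ] X) (x : X) (u : ℝ) :
    HasDerivAt (fun u : ℝ => exp (u • A) x) (A (exp (u • A) x)) u :=
  (ContinuousLinearMap.apply ℝ X x).hasFDerivAt.comp_hasDerivAt u (hasDerivAt_exp_smul_const' A u)

end

section

variable {X : Type*} [NormedAddCommGroup X] [InnerProductSpace ℝ X] [CompleteSpace X]
  {V W : X →L[ℝ] X}

theorem inner_apply_apply_eq_inner_comp (hW : IsSelfAdjoint W) (hWV : W.comp W = V) (a b : X) :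
    ⟪W a, W b⟫ = ⟪V a, b⟫ := by
  rw [← hWV, ContinuousLinearMap.comp_apply]
  exact (hW.isSymmetric (W a) b).symm

theorem inner_apply_self_eq_norm_sq (hW : IsSelfAdjoint W) (hWV : W.comp W = V) (z : X) :
    ⟪V z, z⟫ = ‖W z‖ ^ 2 := by
  rw [← inner_apply_apply_eq_inner_comp hW hWV, real_inner_self_eq_norm_sq]

theorem norm_sq_exp_add_two_mul_norm_sq_le (hW : IsSelfAdjoint W) (hWV : W.comp W = V) (x : X)
    {τ : ℝ} (hτ : 0 ≤ τ) :
    ‖exp ((-τ) • V) x‖ ^ 2 + 2 * τ * ‖W (exp ((-τ) • V) x)‖ ^ 2 ≤ ‖x‖ ^ 2 := by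
  set y : ℝ → X := fun u => exp (u • -V) x
  have hy : ∀ u, HasDerivAt y (-V (y u)) u := hasDerivAt_exp_smul_apply (-V) x
  set G : ℝ → ℝ := fun u => ‖y u‖ ^ 2 + 2 * u * ‖W (y u)‖ ^ 2
  have hG : ∀ u, HasDerivAt G (-(4 * u * ‖V (y u)‖ ^ 2)) u := fun u => by
    have hWy : HasDerivAt (fun u => W (y u)) (W (-V (y u))) u :=
      W.hasFDerivAt.comp_hasDerivAt u (hy u)
    refine ((hy u).norm_sq.add (((hasDerivAt_id u).const_mul 2).mul hWy.norm_sq)).congr_deriv ?_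
    have h1 : ⟪y u, -V (y u)⟫ = -‖W (y u)‖ ^ 2 := by
      rw [inner_neg_right, real_inner_comm, inner_apply_self_eq_norm_sq hW hWV]
    have h2 : ⟪W (y u), W (-V (y u))⟫ = -‖V (y u)‖ ^ 2 := by
      rw [map_neg, inner_neg_right, inner_apply_apply_eq_inner_comp hW hWV,
        real_inner_self_eq_norm_sq]
    rw [h1, h2]
    simp only [id]
    ring
  have hanti : AntitoneOn G (Set.Ici 0) := by
    refine antitoneOn_of_deriv_nonpos (convex_Ici 0)
      (fun u _ => (hG u).continuousAt.continuousWithinAt)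
      (fun u _ => (hG u).differentiableAt.differentiableWithinAt) fun u hu => ?_
    rw [interior_Ici] at hu
    rw [(hG u).deriv, neg_nonpos]
    have : 0 < u := hu
    positivity
  simpa [G, y] using hanti Set.self_mem_Ici hτ hτ

theorem norm_apply_exp_sq_mul_le (hW : IsSelfAdjoint W) (hWV : W.comp W = V) (hW1 : ‖W‖ ≤ 1)
    (x : X) {τ : ℝ} (hτ : 0 ≤ τ) :
    ‖W (exp ((-τ) • V) x)‖ ^ 2 * (1 + 2 * τ) ≤ ‖x‖ ^ 2 := by
  have hcontr : ‖W (exp ((-τ) • V) x)‖ ≤ ‖exp ((-τ) • V) x‖ :=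
    (W.le_opNorm _).trans (mul_le_of_le_one_left (norm_nonneg _) hW1)
  nlinarith [norm_sq_exp_add_two_mul_norm_sq_le hW hWV x hτ,
    pow_le_pow_left₀ (norm_nonneg _) hcontr 2]

theorem norm_exp_smul_comp_le (hW : IsSelfAdjoint W) (hWV : W.comp W = V) (hW1 : ‖W‖ ≤ 1)
    {τ : ℝ} (hτ : 0 ≤ τ) :
    ‖(exp ((-τ) • V)).comp W‖ ≤ (1 + τ) ^ (-(1 / 2 : ℝ)) := by
  have hpos : 0 < 1 + τ := by linarith
  have hcomm : (exp ((-τ) • V)).comp W = W.comp (exp ((-τ) • V)) := by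
    rw [← hWV]
    exact (((Commute.refl W).mul_right (Commute.refl W)).smul_right (-τ)).exp_right.eq.symm
  rw [hcomm]
  refine ContinuousLinearMap.opNorm_le_bound _ (by positivity) fun x => ?_
  rw [ContinuousLinearMap.comp_apply, Real.rpow_neg hpos.le, ← Real.sqrt_eq_rpow,
    inv_mul_eq_div, le_div_iff₀ (Real.sqrt_pos.2 hpos), ← Real.sqrt_sq (norm_nonneg x),
    ← Real.sqrt_sq (norm_nonneg (W _)), ← Real.sqrt_mul (sq_nonneg _)]
  refine Real.sqrt_le_sqrt ((mul_le_mul_of_nonneg_left ?_ (sq_nonneg _)).trans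
    (norm_apply_exp_sq_mul_le hW hWV hW1 x hτ))
  linarith

theorem norm_le_of_spectrum_subset_Icc (hV : IsSelfAdjoint V) {r : ℝ} (hr : 0 ≤ r)
    (hspec : spectrum ℝ V ⊆ Set.Icc (-r) r) : ‖V‖ ≤ r := by
  have h : spectralRadius ℝ V ≤ ENNReal.ofReal r :=
    iSup₂_le fun k hk => by
      rw [ENNReal.le_ofReal_iff_toReal_le ENNReal.coe_ne_top hr, ENNReal.coe_toReal, coe_nnnorm]
      exact abs_le.2 (hspec hk)
  rwa [V.spectralRadius_eq_nnnorm hV, ENNReal.le_ofReal_iff_toReal_le ENNReal.coe_ne_top hr,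
    ENNReal.coe_toReal, coe_nnnorm] at h

end

theorem integral_one_add_sub_rpow_neg_half (t : ℝ) :
    ∫ s in (0 : ℝ)..t, (1 + t - s) ^ (-(1 / 2 : ℝ)) = 2 * (Real.sqrt (1 + t) - 1) := by
  rw [intervalIntegral.integral_comp_sub_left (fun s => s ^ (-(1 / 2 : ℝ))), sub_zero,
    add_sub_cancel_right, integral_rpow (Or.inl (by norm_num)), Real.sqrt_eq_rpow]
  norm_num
  ring

theorem stmt10_general {X : Type*} [NormedAddCommGroup X] [InnerProductSpace ℝ X] [CompleteSpace X]
    (V : X →L[ℝ] X) (hVsa : IsSelfAdjoint V) (hspec : spectrum ℝ V ⊆ Set.Icc (0:ℝ) 1)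
    (W : X →L[ℝ] X) (hWsa : IsSelfAdjoint W)
    (hW2 : W.comp W = V)
    (t : ℝ) (ht : 0 ≤ t) :
    ‖∫ s in (0:ℝ)..t, (NormedSpace.exp (-(t - s) • V)).comp W‖ ≤
        (∫ s in (0:ℝ)..t, (1 + t - s) ^ (-(1/2 : ℝ))) ∧
      (∫ s in (0:ℝ)..t, (1 + t - s) ^ (-(1/2 : ℝ))) ≤ 2 * Real.sqrt (1 + t) := by
  have hW1 : ‖W‖ ≤ 1 := by
    have h := norm_le_of_spectrum_subset_Icc hVsa zero_le_one
      (hspec.trans (Set.Icc_subset_Icc (by norm_num) le_rfl))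
    rw [← hW2, ← ContinuousLinearMap.mul_def, hWsa.norm_mul_self] at h
    nlinarith [norm_nonneg W]
  have hint : IntervalIntegrable (fun s : ℝ => (1 + t - s) ^ (-(1/2 : ℝ)))
      MeasureTheory.volume 0 t := by
    simpa using (intervalIntegral.intervalIntegrable_rpow' (a := 1) (b := 1 + t)
      (r := -(1/2 : ℝ)) (by norm_num)).comp_sub_left (1 + t) |>.symm
  refine ⟨intervalIntegral.norm_integral_le_of_norm_le ht
    (MeasureTheory.ae_of_all _ fun s hs => ?_) hint, ?_⟩
  · rw [add_sub_assoc]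
    exact norm_exp_smul_comp_le hWsa hW2 hW1 (sub_nonneg.2 hs.2)
  · rw [integral_one_add_sub_rpow_neg_half t]
    linarith

/-- For a bounded self-adjoint operator `V` with spectrum in `[0,1]`, `W = V^{1/2}` its
(unique) nonnegative self-adjoint square root, and `t ≥ 0`:
`‖∫₀ᵗ e^{-V(t-s)} V^{1/2} ds‖ ≤ ∫₀ᵗ (1+t-s)^{-1/2} ds ≤ 2√(1+t)`. -/
theorem stmt10 {X : Type*} [NormedAddCommGroup X] [InnerProductSpace ℝ X] [CompleteSpace X]
    (V : X →L[ℝ] X) (hVsa : IsSelfAdjoint V) (hspec : spectrum ℝ V ⊆ Set.Icc (0:ℝ) 1)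
    (W : X →L[ℝ] X) (hWsa : IsSelfAdjoint W) (hWpos : ∀ z : X, 0 ≤ ⟪W z, z⟫)
    (hW2 : W.comp W = V)
    (t : ℝ) (ht : 0 ≤ t) :
    ‖∫ s in (0:ℝ)..t, (NormedSpace.exp (-(t - s) • V)).comp W‖ ≤
        (∫ s in (0:ℝ)..t, (1 + t - s) ^ (-(1/2 : ℝ))) ∧
      (∫ s in (0:ℝ)..t, (1 + t - s) ^ (-(1/2 : ℝ))) ≤ 2 * Real.sqrt (1 + t) :=
  stmt10_general V hVsa hspec W hWsa hW2 t ht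
end
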